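/- arXiv:2509.13222 — 2 statements merged into one kernel-verified Lean document; each statement's English description precedes it below -/
import Mathlib

section
/- Let U : ℝ^d → ℝ be continuously differentiable, let C₀ be a finite subset of ℝ^d, and let R > 0 be such that every zero of ∇U lying in the closed ball B_R belongs to C₀. Let (μ_ε)_{ε>0} be a family of Borel probability measures on ℝ^d such that liminf_{ε→0⁺} (1/ε) ∫_{B_R} |∇U|² dμ_ε < ∞. Then: (a) for every r > 0, liminf_{ε→0⁺} (1/ε)·μ_ε( B_R \ ∪_{c∈C₀} B_r(c) ) < ∞; and (b) if moreover r > 0 and b > 0 are such that ∪_{c∈C₀} B_r(c) ⊆ B_R and |∇U(y)|² ≥ b·|y − c|² for every c ∈ C₀ and y ∈ B_r(c), then liminf_{ε→0⁺} (1/ε) Σ_{c∈C₀} ∫_{B_r(c)} |y − c|² dμ_ε(y) < ∞. -/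
/-!
Removing the open balls `B°_r(c)` from `B_R` leaves a compact set, on which the continuous
function `|∇U|²` has no zeros, hence a positive lower bound `m`, so
`m · μ_ε(B_R \ ⋃ B_r(c)) ≤ ∫_{B_R} |∇U|² dμ_ε`. Likewise the quadratic lower bound gives
`b ∫_{B_r(c)} |y - c|² dμ_ε ≤ ∫_{B_R} |∇U|² dμ_ε` for each `c`. In both cases the quantity
is at most a fixed constant times `∫_{B_R} |∇U|² dμ_ε`, and multiplying
by a finite constant preserves the finiteness of `liminf ε⁻¹ (⋯)`.
-/

open Filter Topology MeasureTheory ENNReal Metric Set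

theorem ContDiff.continuous_gradient {F : Type*} [NormedAddCommGroup F] [InnerProductSpace ℝ F]
    [CompleteSpace F] {U : F → ℝ} (hU : ContDiff ℝ 1 U) : Continuous (gradient U) :=
  (InnerProductSpace.toDual ℝ F).symm.continuous.comp (hU.continuous_fderiv one_ne_zero)

theorem exists_pos_le_norm_sq_off_closedBalls {X E : Type*} [MetricSpace X] [ProperSpace X]
    [NormedAddCommGroup E] {g : X → E} (hg : Continuous g) {C : Set X} {x₀ : X} {R r : ℝ}
    (hr : 0 < r) (hzero : ∀ x ∈ closedBall x₀ R, g x = 0 → x ∈ C) :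
    ∃ m > 0, ∀ x ∈ closedBall x₀ R \ ⋃ c ∈ C, closedBall c r, m ≤ ‖g x‖ ^ 2 := by
  have hK : IsCompact (closedBall x₀ R \ ⋃ c ∈ C, ball c r) :=
    (isCompact_closedBall x₀ R).diff (isOpen_biUnion fun _ _ => isOpen_ball)
  have hpos : ∀ x ∈ closedBall x₀ R \ ⋃ c ∈ C, ball c r, 0 < ‖g x‖ ^ 2 := by
    intro x hx
    have : g x ≠ 0 := fun h0 => hx.2 (mem_biUnion (hzero x hx.1 h0) (mem_ball_self hr))
    positivity
  obtain ⟨m, hm, hmK⟩ := hK.exists_forall_le' (by fun_prop) hpos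
  refine ⟨m, hm, fun x hx => hmK x ⟨hx.1, fun hball => hx.2 ?_⟩⟩
  exact biUnion_mono subset_rfl (fun _ _ => ball_subset_closedBall) hball

theorem setLIntegral_le_inv_mul_setLIntegral_of_subset {X : Type*} [MeasurableSpace X]
    {μ : Measure X} {S T : Set X} (hS : MeasurableSet S) (hST : S ⊆ T) {f g : X → ℝ≥0∞}
    {a : ℝ≥0∞} (ha₀ : a ≠ 0) (ha : a ≠ ⊤) (h : ∀ x ∈ S, a * f x ≤ g x) :
    ∫⁻ x in S, f x ∂μ ≤ a⁻¹ * ∫⁻ x in T, g x ∂μ :=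
  calc ∫⁻ x in S, f x ∂μ = a⁻¹ * ∫⁻ x in S, a * f x ∂μ := by
        rw [lintegral_const_mul' _ _ ha, ENNReal.inv_mul_cancel_left ha₀ ha]
    _ ≤ a⁻¹ * ∫⁻ x in T, g x ∂μ := by
        gcongr a⁻¹ * ?_
        exact (setLIntegral_mono' hS h).trans (lintegral_mono_set hST)

theorem Filter.liminf_mul_lt_top_of_le_const_mul {α : Type*} {l : Filter α} [l.NeBot]
    {w f g : α → ℝ≥0∞} {c : ℝ≥0∞} (hc : c ≠ ⊤) (h : ∀ x, g x ≤ c * f x)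
    (hf : liminf (fun x => w x * f x) l < ⊤) : liminf (fun x => w x * g x) l < ⊤ :=
  calc liminf (fun x => w x * g x) l ≤ liminf (fun x => c * (w x * f x)) l :=
        liminf_le_liminf (.of_forall fun x => by rw [mul_left_comm]; gcongr; exact h x)
    _ = c * liminf (fun x => w x * f x) l := ENNReal.liminf_const_mul_of_ne_top hc
    _ < ⊤ := mul_lt_top hc.lt_top hf

theorem stmt13_general {d : ℕ}
    (U : EuclideanSpace ℝ (Fin d) → ℝ) (hU : ContDiff ℝ 1 U)
    (C₀ : Finset (EuclideanSpace ℝ (Fin d))) (R : ℝ)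
    (hcrit : ∀ x ∈ Metric.closedBall (0 : EuclideanSpace ℝ (Fin d)) R,
      gradient U x = 0 → x ∈ C₀)
    (μ : ℝ → Measure (EuclideanSpace ℝ (Fin d)))
    (hfin : Filter.liminf (fun ε =>
        (ENNReal.ofReal ε)⁻¹ *
          ∫⁻ x in Metric.closedBall (0 : EuclideanSpace ℝ (Fin d)) R,
            ENNReal.ofReal (‖gradient U x‖ ^ 2) ∂(μ ε))
      (𝓝[>] (0:ℝ)) < ⊤) :
    (∀ r : ℝ, 0 < r →
      Filter.liminf (fun ε =>
          (ENNReal.ofReal ε)⁻¹ *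
            μ ε (Metric.closedBall (0 : EuclideanSpace ℝ (Fin d)) R \
              ⋃ c ∈ C₀, Metric.closedBall c r))
        (𝓝[>] (0:ℝ)) < ⊤) ∧
    (∀ r b : ℝ, 0 < r → 0 < b →
      (⋃ c ∈ C₀, Metric.closedBall c r) ⊆
        Metric.closedBall (0 : EuclideanSpace ℝ (Fin d)) R →
      (∀ c ∈ C₀, ∀ y ∈ Metric.closedBall c r,
        b * ‖y - c‖ ^ 2 ≤ ‖gradient U y‖ ^ 2) →
      Filter.liminf (fun ε =>
          (ENNReal.ofReal ε)⁻¹ *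
            ∑ c ∈ C₀, ∫⁻ y in Metric.closedBall c r,
              ENNReal.ofReal (‖y - c‖ ^ 2) ∂(μ ε))
        (𝓝[>] (0:ℝ)) < ⊤) := by
  refine ⟨fun r hr => ?_, fun r b hr hb hsub hquad => ?_⟩
  · obtain ⟨m, hm, hmK⟩ := exists_pos_le_norm_sq_off_closedBalls hU.continuous_gradient hr hcrit
    have hm₀ : ENNReal.ofReal m ≠ 0 := (ofReal_pos.2 hm).ne'
    refine liminf_mul_lt_top_of_le_const_mul (inv_ne_top.2 hm₀) (fun ε => ?_) hfin
    rw [← setLIntegral_one]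
    refine setLIntegral_le_inv_mul_setLIntegral_of_subset
      (measurableSet_closedBall.diff (Finset.measurableSet_biUnion _ fun _ _ =>
        measurableSet_closedBall)) sdiff_subset hm₀ ofReal_ne_top fun x hx => ?_
    simpa using ofReal_le_ofReal (hmK x hx)
  · have hb₀ : ENNReal.ofReal b ≠ 0 := (ofReal_pos.2 hb).ne'
    refine liminf_mul_lt_top_of_le_const_mul (c := C₀.card * (ENNReal.ofReal b)⁻¹)
      (mul_ne_top (natCast_ne_top _) (inv_ne_top.2 hb₀)) (fun ε => ?_) hfin
    rw [mul_assoc, ← nsmul_eq_mul, ← Finset.sum_const]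
    refine Finset.sum_le_sum fun c hc => setLIntegral_le_inv_mul_setLIntegral_of_subset
      measurableSet_closedBall (fun y hy => hsub (mem_biUnion hc hy)) hb₀ ofReal_ne_top
      fun y hy => ?_
    rw [← ofReal_mul hb.le]
    exact ofReal_le_ofReal (hquad c hc y hy)

/-- Concentration estimate: if the probability measures `μ_ε` satisfy
`liminf_{ε→0⁺} ε⁻¹ ∫_{B_R} |∇U|² dμ_ε < ∞`, then (a) for every `r > 0` the mass of
`B_R` away from `r`-balls around the critical points `C₀` is `O(ε)` along a
subsequence, and (b) under a quadratic lower bound on `|∇U|²` near each critical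
point, `liminf_{ε→0⁺} ε⁻¹ Σ_{c∈C₀} ∫_{B_r(c)} |y−c|² dμ_ε < ∞`. -/
theorem stmt13 {d : ℕ}
    (U : EuclideanSpace ℝ (Fin d) → ℝ) (hU : ContDiff ℝ 1 U)
    (C₀ : Finset (EuclideanSpace ℝ (Fin d))) (R : ℝ) (hR : 0 < R)
    (hcrit : ∀ x ∈ Metric.closedBall (0 : EuclideanSpace ℝ (Fin d)) R,
      gradient U x = 0 → x ∈ C₀)
    (μ : ℝ → Measure (EuclideanSpace ℝ (Fin d)))
    (hμ : ∀ ε : ℝ, 0 < ε → IsProbabilityMeasure (μ ε))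
    (hfin : Filter.liminf (fun ε =>
        (ENNReal.ofReal ε)⁻¹ *
          ∫⁻ x in Metric.closedBall (0 : EuclideanSpace ℝ (Fin d)) R,
            ENNReal.ofReal (‖gradient U x‖ ^ 2) ∂(μ ε))
      (𝓝[>] (0:ℝ)) < ⊤) :
    (∀ r : ℝ, 0 < r →
      Filter.liminf (fun ε =>
          (ENNReal.ofReal ε)⁻¹ *
            μ ε (Metric.closedBall (0 : EuclideanSpace ℝ (Fin d)) R \
              ⋃ c ∈ C₀, Metric.closedBall c r))
        (𝓝[>] (0:ℝ)) < ⊤) ∧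
    (∀ r b : ℝ, 0 < r → 0 < b →
      (⋃ c ∈ C₀, Metric.closedBall c r) ⊆
        Metric.closedBall (0 : EuclideanSpace ℝ (Fin d)) R →
      (∀ c ∈ C₀, ∀ y ∈ Metric.closedBall c r,
        b * ‖y - c‖ ^ 2 ≤ ‖gradient U y‖ ^ 2) →
      Filter.liminf (fun ε =>
          (ENNReal.ofReal ε)⁻¹ *
            ∑ c ∈ C₀, ∫⁻ y in Metric.closedBall c r,
              ENNReal.ofReal (‖y - c‖ ^ 2) ∂(μ ε))
        (𝓝[>] (0:ℝ)) < ⊤) :=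
  stmt13_general U hU C₀ R hcrit μ hfin
end

section
/- Let U : ℝ^d → ℝ be three times continuously differentiable with U(0) = 0, ∇U(0) = 0 and ∇²U(0) invertible. Write ∇²U(0) = 𝕌 D 𝕌ᵀ with 𝕌 orthogonal and D = diag(λ₁,…,λ_d), set H̃ := 𝕌 D̃ 𝕌ᵀ with D̃ := diag(min(λ₁,0),…,min(λ_d,0)), and G(x) := x·H̃x. Let φ : ℝ^d → [0,1] be continuous with φ = 1 on B_{1/2} and φ = 0 outside B_1, and let δ : (0,∞) → (0,∞) satisfy √ε/δ(ε) → 0 and δ(ε)³/ε → 0 as ε → 0⁺. For ε > 0 define the probability measure μ_ε(dx) := e^{(G(x) − U(x))/ε} φ(x/δ(ε))² dx / ∫_{ℝ^d} e^{(G(y) − U(y))/ε} φ(y/δ(ε))² dy. Then μ_ε converges weakly to the Dirac measure δ₀ as ε → 0⁺; that is, for every bounded continuous f : ℝ^d → ℝ, lim_{ε→0⁺} ∫ f dμ_ε = f(0). -/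
open Filter Topology MeasureTheory Matrix

/-- The quadratic form `x ↦ x·Mx` of a matrix `M` on Euclidean space. -/
def quadForm {d : ℕ} (M : Matrix (Fin d) (Fin d) ℝ)
    (x : EuclideanSpace ℝ (Fin d)) : ℝ :=
  ∑ i, ∑ j, x i * M i j * x j

/-- The negative part `H̃ = 𝕌 diag(min(λ,0)) 𝕌ᵀ` of the symmetric matrix
`𝕌 diag(λ) 𝕌ᵀ`. -/
def negPart {d : ℕ} (Umat : Matrix (Fin d) (Fin d) ℝ) (lam : Fin d → ℝ) :
    Matrix (Fin d) (Fin d) ℝ :=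
  Umat * Matrix.diagonal (fun i => min (lam i) 0) * Umatᵀ


lemma quadForm_continuous {d : ℕ} (M : Matrix (Fin d) (Fin d) ℝ) :
    Continuous (quadForm M) := by
  unfold quadForm
  fun_prop

lemma quadForm_zero {d : ℕ} (M : Matrix (Fin d) (Fin d) ℝ) :
    quadForm M 0 = 0 := by
  simp [quadForm]

/-- Weak convergence to `δ₀` of the recovery measures
`μ_ε ∝ e^{(G−U)/ε} φ(x/δ(ε))² dx`, where `G(x) = x·H̃x` with `H̃` the negative part
of the Hessian `∇²U(0) = 𝕌 diag(λ) 𝕌ᵀ`, `φ` is a cutoff and `√ε ≺ δ(ε) ≺ ε^{1/3}`. -/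
theorem stmt16 {d : ℕ}
    (U : EuclideanSpace ℝ (Fin d) → ℝ) (hU : ContDiff ℝ 3 U)
    (hU0 : U 0 = 0) (hgrad0 : gradient U 0 = 0)
    (Umat : Matrix (Fin d) (Fin d) ℝ)
    (hO1 : Umat * Umatᵀ = 1) (hO2 : Umatᵀ * Umat = 1)
    (lam : Fin d → ℝ) (hlam : ∀ i, lam i ≠ 0)
    (hHess : ∀ v : EuclideanSpace ℝ (Fin d), ∀ i,
      (fderiv ℝ (gradient U) 0 v) i =
        ∑ j, (Umat * Matrix.diagonal lam * Umatᵀ) i j * v j)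
    (φ : EuclideanSpace ℝ (Fin d) → ℝ) (hφ : Continuous φ)
    (hφ01 : ∀ x, φ x ∈ Set.Icc (0:ℝ) 1)
    (hφ1 : ∀ x ∈ Metric.closedBall (0 : EuclideanSpace ℝ (Fin d)) (1/2), φ x = 1)
    (hφ0 : ∀ x ∉ Metric.closedBall (0 : EuclideanSpace ℝ (Fin d)) 1, φ x = 0)
    (δ : ℝ → ℝ) (hδpos : ∀ ε : ℝ, 0 < ε → 0 < δ ε)
    (hδ1 : Tendsto (fun ε => Real.sqrt ε / δ ε) (𝓝[>] (0:ℝ)) (𝓝 0))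
    (hδ2 : Tendsto (fun ε => (δ ε) ^ 3 / ε) (𝓝[>] (0:ℝ)) (𝓝 0)) :
    ∀ f : EuclideanSpace ℝ (Fin d) → ℝ, Continuous f → (∃ M : ℝ, ∀ x, |f x| ≤ M) →
      Tendsto (fun ε =>
          (∫ x, Real.exp ((quadForm (negPart Umat lam) x - U x) / ε) *
              (φ ((δ ε)⁻¹ • x)) ^ 2 * f x) /
            ∫ x, Real.exp ((quadForm (negPart Umat lam) x - U x) / ε) *
              (φ ((δ ε)⁻¹ • x)) ^ 2)
        (𝓝[>] (0:ℝ)) (𝓝 (f 0)) := by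
  intro f hf hbdd
  obtain ⟨M0, hM0⟩ := hbdd
  rw [Metric.tendsto_nhds]
  intro η hη
  obtain ⟨r, hr, hfr⟩ := Metric.continuousAt_iff.mp (hf.continuousAt (x := 0)) (η/2) (by positivity)
  have E1 : ∀ᶠ ε in 𝓝[>] (0:ℝ), 0 < ε := self_mem_nhdsWithin
  have E2 : ∀ᶠ ε in 𝓝[>] (0:ℝ), (δ ε)^3 / ε < 1 :=
    hδ2.eventually (eventually_lt_nhds one_pos)
  have E3 : ∀ᶠ ε in 𝓝[>] (0:ℝ), ε < r^3 :=
    eventually_nhdsWithin_of_eventually_nhds (eventually_lt_nhds (by positivity))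
  filter_upwards [E1, E2, E3] with ε hε h1 h3
  have hc : 0 < δ ε := hδpos ε hε
  have hcr : δ ε < r := by
    have h4 : (δ ε)^3 < ε := (div_lt_one hε).mp h1
    have h5 : (δ ε)^3 < r^3 := h4.trans h3
    exact lt_of_pow_lt_pow_left₀ 3 hr.le h5
  set g : EuclideanSpace ℝ (Fin d) → ℝ := fun x =>
    Real.exp ((quadForm (negPart Umat lam) x - U x) / ε) * (φ ((δ ε)⁻¹ • x)) ^ 2 with hg
  have hgc : Continuous g := by
    apply Continuous.mul
    · exact Real.continuous_exp.comp
        (((quadForm_continuous _).sub hU.continuous).div_const ε)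
    · exact (hφ.comp (continuous_const_smul _)).pow 2
  have hgnn : ∀ x, 0 ≤ g x := fun x => mul_nonneg (Real.exp_pos _).le (sq_nonneg _)
  have hsupp : ∀ x, x ∉ Metric.closedBall (0 : EuclideanSpace ℝ (Fin d)) (δ ε) → g x = 0 := by
    intro x hx
    have hx' : (δ ε) < ‖x‖ := by
      simpa [Metric.mem_closedBall, dist_zero_right, not_le] using hx
    have h6 : (1:ℝ) < ‖(δ ε)⁻¹ • x‖ := by
      rw [norm_smul, Real.norm_eq_abs, abs_of_pos (inv_pos.mpr hc)]
      rw [lt_inv_mul_iff₀ hc]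
      simpa using hx'
    have hφx : φ ((δ ε)⁻¹ • x) = 0 := by
      apply hφ0
      simpa [Metric.mem_closedBall, dist_zero_right, not_le] using h6
    simp [hg, hφx]
  have hsg : HasCompactSupport g :=
    HasCompactSupport.intro (isCompact_closedBall _ _) hsupp
  have hgint : Integrable g := hgc.integrable_of_hasCompactSupport hsg
  have hgfint : Integrable (fun x => g x * f x) :=
    (hgc.mul hf).integrable_of_hasCompactSupport (hsg.mul_right)
  have hg0 : g 0 = 1 := by
    have hφ00 : φ ((δ ε)⁻¹ • (0 : EuclideanSpace ℝ (Fin d))) = 1 := by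
      rw [smul_zero]
      exact hφ1 0 (Metric.mem_closedBall_self (by norm_num))
    rw [hg]
    show Real.exp ((quadForm (negPart Umat lam) 0 - U 0) / ε) *
        (φ ((δ ε)⁻¹ • (0:EuclideanSpace ℝ (Fin d)))) ^ 2 = 1
    rw [hφ00, quadForm_zero, hU0]
    norm_num
  have hDpos : 0 < ∫ x, g x := by
    rw [integral_pos_iff_support_of_nonneg hgnn hgint]
    have hopen : IsOpen {x : EuclideanSpace ℝ (Fin d) | 0 < g x} :=
      isOpen_lt continuous_const hgc
    have h0mem : (0 : EuclideanSpace ℝ (Fin d)) ∈ {x | 0 < g x} := by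
      simp [hg0]
    calc (0:ENNReal) < volume {x : EuclideanSpace ℝ (Fin d) | 0 < g x} :=
          hopen.measure_pos volume ⟨0, h0mem⟩
      _ ≤ volume (Function.support g) := by
          apply measure_mono
          intro x hx
          exact ne_of_gt hx
  have hptwise : ∀ x, |g x * (f x - f 0)| ≤ (η/2) * g x := by
    intro x
    by_cases hx : x ∈ Metric.closedBall (0 : EuclideanSpace ℝ (Fin d)) (δ ε)
    · have hxr : dist x 0 < r := by
        rw [dist_zero_right]
        calc ‖x‖ ≤ δ ε := by simpa [Metric.mem_closedBall, dist_zero_right] using hx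
          _ < r := hcr
      have hfb : |f x - f 0| ≤ η/2 := by
        have h7 := hfr hxr
        rw [Real.dist_eq] at h7
        linarith
      rw [abs_mul, abs_of_nonneg (hgnn x), mul_comm]
      exact mul_le_mul_of_nonneg_right hfb (hgnn x)
    · rw [hsupp x hx]
      simp
  have hkey : |(∫ x, g x * f x) - f 0 * ∫ x, g x| ≤ (η/2) * ∫ x, g x := by
    have heq : (∫ x, g x * f x) - f 0 * ∫ x, g x = ∫ x, g x * (f x - f 0) := by
      rw [← integral_const_mul, ← integral_sub hgfint (hgint.const_mul (f 0))]
      congr 1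
      funext x
      ring
    rw [heq]
    calc |∫ x, g x * (f x - f 0)| ≤ ∫ x, |g x * (f x - f 0)| :=
          by simpa only [Real.norm_eq_abs] using
            MeasureTheory.norm_integral_le_integral_norm (μ := volume)
              (fun x => g x * (f x - f 0))
      _ ≤ ∫ x, (η/2) * g x := by
          apply integral_mono _ (hgint.const_mul _) hptwise
          exact ((hgc.mul (hf.sub continuous_const)).abs).integrable_of_hasCompactSupport
            ((hsg.mul_right).abs)
      _ = (η/2) * ∫ x, g x := integral_const_mul _ _
  have hmain : |(∫ x, g x * f x) / (∫ x, g x) - f 0| < η := by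
    have hD : (∫ x, g x) ≠ 0 := ne_of_gt hDpos
    have heq2 : (∫ x, g x * f x) / (∫ x, g x) - f 0
        = ((∫ x, g x * f x) - f 0 * ∫ x, g x) / (∫ x, g x) := by
      field_simp
    rw [heq2, abs_div, abs_of_pos hDpos, div_lt_iff₀ hDpos]
    calc |(∫ x, g x * f x) - f 0 * ∫ x, g x| ≤ (η/2) * ∫ x, g x := hkey
      _ < η * ∫ x, g x := by nlinarith
  rw [Real.dist_eq]
  simpa only [hg] using hmain
end
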